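/- arXiv:1701.03301 — 3 statements merged into one kernel-verified Lean document; each statement's English description precedes it below -/
import Mathlib

section
/- Let F be a proper filter on ℕ and assume that there exists an ultrafilter V on ℕ with F ⊆ V and F ⊆ F ⊕ V. Then every A ∈ F is finitely additively large: for every k ∈ ℕ there exist x₁ < x₂ < … < x_k in ℕ such that FS({x₁,…,x_k}) ⊆ A. -/
open Filter Set

/-- The rightward shift `A − n = {m ∈ ℕ+ | m + n ∈ A}`. -/
def shiftSet (A : Set ℕ+) (n : ℕ+) : Set ℕ+ := {m | m + n ∈ A}

/-- The pseudo-sum of two filters on `ℕ+`: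
`A ∈ F ⊕ G ↔ {n | A − n ∈ G} ∈ F`. -/
def psum (F G : Filter ℕ+) : Filter ℕ+ where
  sets := {A | {n | shiftSet A n ∈ G} ∈ F}
  univ_sets := Filter.univ_mem' fun _ => Filter.univ_mem' fun _ => trivial
  sets_of_superset := by
    intro A B hA hAB
    refine Filter.mem_of_superset hA fun n hn => ?_
    exact Filter.mem_of_superset hn fun m hm => hAB hm
  inter_sets := by
    intro A B hA hB
    refine Filter.mem_of_superset (Filter.inter_mem hA hB) ?_
    rintro n ⟨h1, h2⟩
    exact Filter.inter_mem h1 h2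

/-- `A_V = {n | A − n ∈ V}`. -/
def subV (A : Set ℕ+) (V : Ultrafilter ℕ+) : Set ℕ+ :=
  {n | shiftSet A n ∈ (V : Filter ℕ+)}

/-- The family `F(V,G) = {B | B ⊇ F' ∩ A_V for some F' ∈ F, A ∈ G}`. -/
def fvg (F : Filter ℕ+) (V : Ultrafilter ℕ+) (G : Filter ℕ+) : Filter ℕ+ where
  sets := {B | ∃ F' ∈ F, ∃ A ∈ G, F' ∩ subV A V ⊆ B}
  univ_sets := ⟨Set.univ, Filter.univ_mem, Set.univ, Filter.univ_mem, fun _ _ => trivial⟩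
  sets_of_superset := by
    rintro A B ⟨F', hF', A', hA', hsub⟩ hAB
    exact ⟨F', hF', A', hA', hsub.trans hAB⟩
  inter_sets := by
    rintro A B ⟨F1, hF1, A1, hA1, h1⟩ ⟨F2, hF2, A2, hA2, h2⟩
    refine ⟨F1 ∩ F2, Filter.inter_mem hF1 hF2, A1 ∩ A2, Filter.inter_mem hA1 hA2, ?_⟩
    rintro n ⟨⟨hn1, hn2⟩, hv⟩
    have hv1 : n ∈ subV A1 V := Filter.mem_of_superset hv fun m hm => hm.1
    have hv2 : n ∈ subV A2 V := Filter.mem_of_superset hv fun m hm => hm.2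
    exact ⟨h1 ⟨hn1, hv1⟩, h2 ⟨hn2, hv2⟩⟩

/-- `FS(X)`: all finite sums of distinct elements of `X`. -/
def FS (X : Set ℕ+) : Set ℕ+ :=
  {n | ∃ F : Finset ℕ+, F.Nonempty ∧ ↑F ⊆ X ∧ ∑ x ∈ F, (x : ℕ) = (n : ℕ)}

/-- A filter `F` is additive if `F ⊆ F ⊕ V` for every ultrafilter `V ⊇ F`. -/
def AdditiveFilter (F : Filter ℕ+) : Prop :=
  ∀ V : Ultrafilter ℕ+, (∀ A : Set ℕ+, A ∈ F → A ∈ (V : Filter ℕ+)) →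
    ∀ A : Set ℕ+, A ∈ F → A ∈ psum F ↑V

/-- The pseudo-sum of two ultrafilters, as an ultrafilter. -/
def usum (U V : Ultrafilter ℕ+) : Ultrafilter ℕ+ :=
  Ultrafilter.ofComplNotMemIff (psum ↑U ↑V) (by
    intro s
    show ¬ {n | shiftSet sᶜ n ∈ (V : Filter ℕ+)} ∈ (U : Filter ℕ+) ↔
      {n | shiftSet s n ∈ (V : Filter ℕ+)} ∈ (U : Filter ℕ+)
    have h : {n : ℕ+ | shiftSet sᶜ n ∈ (V : Filter ℕ+)}
        = {n : ℕ+ | shiftSet s n ∈ (V : Filter ℕ+)}ᶜ := by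
      ext n
      show (shiftSet s n)ᶜ ∈ (V : Filter ℕ+) ↔ ¬ shiftSet s n ∈ (V : Filter ℕ+)
      exact Ultrafilter.compl_mem_iff_notMem
    rw [h]
    exact Ultrafilter.compl_notMem_iff)

/-- `Fil(C) = ⋂_{U ∈ C} U`. -/
def filOf (C : Set (Ultrafilter ℕ+)) : Filter ℕ+ where
  sets := {A | ∀ U ∈ C, A ∈ (U : Filter ℕ+)}
  univ_sets := fun _ _ => Filter.univ_mem
  sets_of_superset := fun h hAB U hU => Filter.mem_of_superset (h U hU) hAB
  inter_sets := fun h1 h2 U hU => Filter.inter_mem (h1 U hU) (h2 U hU)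

/-- `Cl(F) = {U ∈ βℕ | F ⊆ U}`. -/
def clOf (F : Filter ℕ+) : Set (Ultrafilter ℕ+) :=
  {U | ∀ A : Set ℕ+, A ∈ F → A ∈ (U : Filter ℕ+)}

lemma FS_mono {Y Z : Set ℕ+} (h : Y ⊆ Z) : FS Y ⊆ FS Z := by
  rintro n ⟨F, hne, hsub, hsum⟩
  exact ⟨F, hne, hsub.trans h, hsum⟩

/-- The filter `FS_X = {A | A ⊇ FS(X \ F) for some finite F ⊆ X}`. -/
def fsFilter (X : Set ℕ+) : Filter ℕ+ where
  sets := {A | ∃ F : Finset ℕ+, ↑F ⊆ X ∧ FS (X \ ↑F) ⊆ A}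
  univ_sets := ⟨∅, by simp, fun _ _ => trivial⟩
  sets_of_superset := by
    rintro A B ⟨F, hF, hFS⟩ hAB
    exact ⟨F, hF, hFS.trans hAB⟩
  inter_sets := by
    rintro A B ⟨F1, hF1, h1⟩ ⟨F2, hF2, h2⟩
    refine ⟨F1 ∪ F2, ?_, fun n hn =>
      ⟨h1 (FS_mono (Set.diff_subset_diff_right ?_) hn),
       h2 (FS_mono (Set.diff_subset_diff_right ?_) hn)⟩⟩
    · intro x hx
      simp only [Finset.coe_union, Set.mem_union] at hx
      exact hx.elim (fun h => hF1 h) (fun h => hF2 h)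
    · intro x hx
      simp only [Finset.coe_union, Set.mem_union]
      exact Or.inl hx
    · intro x hx
      simp only [Finset.coe_union, Set.mem_union]
      exact Or.inr hx

/-- `A` is finitely additively large (FAL): for every `n` there are
`x₁ < … < xₙ` with `FS({x₁,…,xₙ}) ⊆ A`. -/
def FAL (A : Set ℕ+) : Prop :=
  ∀ n : ℕ, ∃ x : Fin n → ℕ+, StrictMono x ∧ FS (Set.range x) ⊆ A

/-- The family `{A | Aᶜ is not FAL}`. -/
def falFamily : Set (Set ℕ+) := {A | ¬ FAL Aᶜ}

/-- `(m+1)·p` as a `ℕ+`. -/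
def pmul (p : ℕ+) (m : ℕ) : ℕ+ := ⟨(m + 1) * (p : ℕ), Nat.mul_pos m.succ_pos p.pos⟩

lemma pmul_coe (p : ℕ+) (m : ℕ) : ((pmul p m : ℕ+) : ℕ) = (m + 1) * (p : ℕ) := rfl

/-- The star operation `B ↦ B ∩ {n | B − n ∈ V}`. -/
def starOp (V : Ultrafilter ℕ+) (B : Set ℕ+) : Set ℕ+ :=
  B ∩ {n | shiftSet B n ∈ (V : Filter ℕ+)}

lemma FS_list_finite (l : List ℕ+) : (FS {y | y ∈ l}).Finite := by
  have h : FS {y | y ∈ l} ⊆ (fun n : ℕ+ => (n : ℕ)) ⁻¹'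
      ↑(l.toFinset.powerset.image fun G : Finset ℕ+ => ∑ x ∈ G, (x : ℕ)) := by
    rintro n ⟨G, hne, hsub, hsum⟩
    exact Set.mem_preimage.2 (Finset.mem_coe.2 (Finset.mem_image.2 ⟨G, Finset.mem_powerset.2
      (fun y hy => List.mem_toFinset.2 (hsub hy)), hsum⟩))
  exact ((Finset.finite_toSet _).preimage (PNat.coe_injective.injOn)).subset h

/-- If `F` is a proper filter and there is an ultrafilter `V ⊇ F`
with `F ⊆ F ⊕ V`, then every `A ∈ F` is finitely additively large. -/
theorem statement17 (F : Filter ℕ+) (hF : F.NeBot)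
    (V : Ultrafilter ℕ+)
    (hFV : ∀ A : Set ℕ+, A ∈ F → A ∈ (V : Filter ℕ+))
    (hFFV : ∀ A : Set ℕ+, A ∈ F → A ∈ psum F ↑V) :
    ∀ A : Set ℕ+, A ∈ F →
      ∀ k : ℕ, ∃ x : Fin k → ℕ+, StrictMono x ∧ FS (Set.range x) ⊆ A := by
  intro A hA k
  rcases V.le_cofinite_or_eq_pure with hcof | ⟨p, hp⟩
  · -- V is nonprincipal (contains all cofinite sets)
    -- iterated star sets stay in F
    have hmem_iter : ∀ m : ℕ, (starOp V)^[m] A ∈ F := by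
      intro m
      induction m with
      | zero => simpa using hA
      | succ m ih =>
        rw [Function.iterate_succ_apply']
        exact Filter.inter_mem ih (hFFV _ ih)
    have hsub_iter : ∀ m : ℕ, (starOp V)^[m+1] A ⊆ (starOp V)^[m] A := by
      intro m
      rw [Function.iterate_succ_apply']
      exact Set.inter_subset_left
    have hstar : ∀ m : ℕ, ∀ s ∈ (starOp V)^[m+1] A,
        shiftSet ((starOp V)^[m] A) s ∈ (V : Filter ℕ+) := by
      intro m s hs
      rw [Function.iterate_succ_apply'] at hs
      exact hs.2
    have key : ∀ j : ℕ, j ≤ k → ∃ l : List ℕ+, l.length = j ∧ l.Pairwise (· < ·) ∧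
        ∀ n ∈ FS {y | y ∈ l}, n ∈ (starOp V)^[k - j] A := by
      intro j
      induction j with
      | zero =>
        intro _
        refine ⟨[], rfl, List.Pairwise.nil, ?_⟩
        rintro n ⟨G, ⟨g, hg⟩, hsub, -⟩
        exact absurd (hsub hg) (by simp)
      | succ j ih =>
        intro hjk
        obtain ⟨l, hlen, hsort, hFS⟩ := ih (Nat.le_of_succ_le hjk)
        have hm : k - j = (k - (j + 1)) + 1 := by omega
        rw [hm] at hFS
        have hS1 : (starOp V)^[k - (j+1)] A ∈ (V : Filter ℕ+) := hFV _ (hmem_iter _)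
        have hS2 : (⋂ s ∈ FS {y | y ∈ l}, shiftSet ((starOp V)^[k - (j+1)] A) s)
            ∈ (V : Filter ℕ+) :=
          (Filter.biInter_mem (FS_list_finite l)).2 fun s hs => hstar _ s (hFS s hs)
        have hS3 : {n : ℕ+ | ∀ y ∈ l, y < n} ∈ (V : Filter ℕ+) := by
          apply hcof
          rw [Filter.mem_cofinite]
          apply Set.Finite.subset ((l.toFinset.finite_toSet).biUnion
            fun y _ => Set.finite_Iic y)
          intro n hn
          simp only [Set.mem_compl_iff, Set.mem_setOf_eq, not_forall] at hn
          obtain ⟨y, hy, hlt⟩ := hn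
          exact Set.mem_biUnion (List.mem_toFinset.2 hy) (not_lt.1 hlt)
        obtain ⟨x, ⟨hx1, hx2⟩, hx3⟩ :=
          Filter.nonempty_of_mem (Filter.inter_mem (Filter.inter_mem hS1 hS2) hS3)
        refine ⟨l ++ [x], by simp [hlen], ?_, ?_⟩
        · refine List.pairwise_append.2 ⟨hsort, List.pairwise_singleton _ _,
            fun a ha b hb => ?_⟩
          rw [List.mem_singleton] at hb
          subst hb
          exact hx3 a ha
        · rintro n ⟨G, hne, hsub, hsum⟩
          by_cases hxG : x ∈ G
          · rcases Finset.eq_empty_or_nonempty (G.erase x) with he | hne'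
            · have hG : G = {x} := by
                refine Finset.eq_singleton_iff_unique_mem.2 ⟨hxG, fun y hy => ?_⟩
                by_contra hyx
                have : y ∈ G.erase x := Finset.mem_erase.2 ⟨hyx, hy⟩
                rw [he] at this
                exact absurd this (Finset.notMem_empty y)
              have hnx : n = x := by
                apply PNat.coe_injective
                rw [← hsum, hG, Finset.sum_singleton]
              rw [hnx]
              exact hx1
            · have hspos : 0 < ∑ y ∈ G.erase x, (y : ℕ) :=
                Finset.sum_pos (fun y _ => y.pos) hne'
              set s' : ℕ+ := ⟨∑ y ∈ G.erase x, (y : ℕ), hspos⟩ with hs'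
              have hs'FS : s' ∈ FS {y | y ∈ l} := by
                refine ⟨G.erase x, hne', fun y hy => ?_, rfl⟩
                have hyG := Finset.mem_erase.1 hy
                have := hsub hyG.2
                simp only [Set.mem_setOf_eq, List.mem_append, List.mem_singleton] at this ⊢
                rcases this with h | h
                · exact h
                · exact absurd h hyG.1
              have hx2' : x ∈ shiftSet ((starOp V)^[k - (j+1)] A) s' :=
                Set.mem_iInter₂.1 hx2 s' hs'FS
              have hn : n = x + s' := by
                apply PNat.coe_injective
                show (n : ℕ) = ((x : ℕ+) : ℕ) + ((s' : ℕ+) : ℕ)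
                rw [← hsum, ← Finset.add_sum_erase _ _ hxG]
                rfl
              rw [hn]
              exact hx2'
          · have hGl : ↑G ⊆ {y | y ∈ l} := by
              intro y hy
              have := hsub hy
              simp only [Set.mem_setOf_eq, List.mem_append, List.mem_singleton] at this ⊢
              rcases this with h | h
              · exact h
              · exact absurd (h ▸ hy) hxG
            exact hsub_iter _ (hFS n ⟨G, hne, hGl, hsum⟩)
    obtain ⟨l, hlen, hsort, hFS⟩ := key k le_rfl
    have hFS0 : ∀ n ∈ FS {y | y ∈ l}, n ∈ A := by
      rw [Nat.sub_self] at hFS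
      exact hFS
    refine ⟨fun i => l.get (Fin.cast hlen.symm i), ?_, ?_⟩
    · intro i j hij
      exact hsort.sortedLT.strictMono_get
        (show Fin.cast hlen.symm i < Fin.cast hlen.symm j from hij)
    · rintro n ⟨G, hne, hsub, hsum⟩
      refine hFS0 n ⟨G, hne, fun y hy => ?_, hsum⟩
      obtain ⟨i, rfl⟩ := hsub hy
      exact l.get_mem _
  · -- V = pure p
    have hpmem : ∀ B ∈ F, p ∈ B := by
      intro B hB
      have := hFV B hB
      rw [hp] at this
      exact this
    have he : ∀ m : ℕ, ∀ B ∈ F, pmul p m ∈ B := by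
      intro m
      induction m with
      | zero =>
        intro B hB
        have h0 : pmul p 0 = p := PNat.coe_injective (by simp [pmul_coe])
        rw [h0]
        exact hpmem B hB
      | succ m ih =>
        intro B hB
        have hS : {n : ℕ+ | shiftSet B n ∈ (V : Filter ℕ+)} ∈ F := hFFV B hB
        have h1 : shiftSet B (pmul p m) ∈ (V : Filter ℕ+) := ih _ hS
        rw [hp] at h1
        have h2 : p + pmul p m ∈ B := h1
        have h3 : pmul p (m + 1) = p + pmul p m := by
          apply PNat.coe_injective
          show (m + 1 + 1) * (p : ℕ) = ((p : ℕ+) : ℕ) + (m + 1) * (p : ℕ)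
          ring
        rw [h3]
        exact h2
    refine ⟨fun i => pmul p i, ?_, ?_⟩
    · intro i j hij
      have : (i : ℕ) < (j : ℕ) := hij
      show ((pmul p i : ℕ+) : ℕ) < ((pmul p j : ℕ+) : ℕ)
      rw [pmul_coe, pmul_coe]
      exact Nat.mul_lt_mul_of_lt_of_le (by omega) le_rfl p.pos
    · rintro n ⟨G, hne, hsub, hsum⟩
      have hdvd : (p : ℕ) ∣ (n : ℕ) := by
        rw [← hsum]
        refine Finset.dvd_sum fun y hy => ?_
        obtain ⟨i, rfl⟩ := hsub hy
        rw [pmul_coe]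
        exact dvd_mul_left _ _
      obtain ⟨c, hc⟩ := hdvd
      have hcpos : 0 < c := by
        rcases Nat.eq_zero_or_pos c with rfl | h
        · rw [Nat.mul_zero] at hc
          exact absurd hc n.pos.ne'
        · exact h
      have hnc : n = pmul p (c - 1) := by
        apply PNat.coe_injective
        rw [pmul_coe, Nat.sub_add_cancel hcpos, hc, Nat.mul_comm]
      rw [hnc]
      exact he (c - 1) A hA
end

section
/- Let F be an additive proper filter on ℕ. Then every A ∈ F is additively large: there exists an infinite set X ⊆ ℕ with FS(X) ⊆ A. -/
open Filter Set

attribute [local instance] Ultrafilter.add Ultrafilter.addSemigroup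

/-- Any sum of stream entries over a finite nonempty index set lies in `Hindman.FS`. -/
lemma sum_get_mem_FS : ∀ N : ℕ, ∀ s : Finset ℕ, (∑ i ∈ s, i) = N → s.Nonempty →
    ∀ a : Stream' ℕ+, ∃ m ∈ Hindman.FS a, (m : ℕ) = ∑ i ∈ s, (a.get i : ℕ) := by
  intro N
  induction N using Nat.strong_induction_on with
  | _ N ih =>
    intro s hsum hne a
    by_cases h0 : (0 : ℕ) ∈ s
    · rcases (s.erase 0).eq_empty_or_nonempty with hte | hte
      · have hs : s = {0} := by
          apply Finset.eq_singleton_iff_unique_mem.mpr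
          refine ⟨h0, fun x hx => ?_⟩
          by_contra hx0
          exact Finset.notMem_empty x (hte ▸ Finset.mem_erase.mpr ⟨hx0, hx⟩)
        refine ⟨a.head, Hindman.FS.head a, ?_⟩
        rw [hs, Finset.sum_singleton]
      · set t := s.erase 0 with ht
        have htpos : ∀ i ∈ t, 1 ≤ i := fun i hi =>
          Nat.one_le_iff_ne_zero.mpr (Finset.ne_of_mem_erase hi)
        have hinj : ∀ x ∈ t, ∀ y ∈ t, x - 1 = y - 1 → x = y := by
          intro x hx y hy h
          have := htpos x hx; have := htpos y hy; omega
        have hlt : (∑ i ∈ t.image (· - 1), i) < N := by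
          rw [Finset.sum_image hinj]
          calc ∑ i ∈ t, (i - 1) < ∑ i ∈ t, i :=
                Finset.sum_lt_sum_of_nonempty hte (fun i hi => by have := htpos i hi; omega)
            _ ≤ ∑ i ∈ s, i := Finset.sum_le_sum_of_subset (Finset.erase_subset 0 s)
            _ = N := hsum
        obtain ⟨m, hm, hmv⟩ := ih _ hlt (t.image (· - 1)) rfl (hte.image _) a.tail
        refine ⟨a.head + m, Hindman.FS.cons a m hm, ?_⟩
        have hsplit : ∑ i ∈ s, (a.get i : ℕ) = (a.get 0 : ℕ) + ∑ i ∈ t, (a.get i : ℕ) :=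
          (Finset.add_sum_erase s _ h0).symm
        rw [PNat.add_coe, hmv, hsplit]
        congr 1
        rw [Finset.sum_image hinj]
        refine Finset.sum_congr rfl fun i hi => ?_
        have h2 : i - 1 + 1 = i := by have := htpos i hi; omega
        rw [Stream'.get_tail, h2]
    · have hpos : ∀ i ∈ s, 1 ≤ i := fun i hi =>
        Nat.one_le_iff_ne_zero.mpr (fun h => h0 (h ▸ hi))
      have hinj : ∀ x ∈ s, ∀ y ∈ s, x - 1 = y - 1 → x = y := by
        intro x hx y hy h
        have := hpos x hx; have := hpos y hy; omega
      have hlt : (∑ i ∈ s.image (· - 1), i) < N := by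
        rw [Finset.sum_image hinj]
        calc ∑ i ∈ s, (i - 1) < ∑ i ∈ s, i :=
              Finset.sum_lt_sum_of_nonempty hne (fun i hi => by have := hpos i hi; omega)
          _ = N := hsum
      obtain ⟨m, hm, hmv⟩ := ih _ hlt (s.image (· - 1)) rfl (hne.image _) a.tail
      refine ⟨m, Hindman.FS.tail a m hm, ?_⟩
      rw [hmv, Finset.sum_image hinj]
      refine Finset.sum_congr rfl fun i hi => ?_
      have h2 : i - 1 + 1 = i := by have := hpos i hi; omega
      rw [Stream'.get_tail, h2]

/-- Consecutive blocks of indices: `(start, length)`. -/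
def blk (a : Stream' ℕ+) : ℕ → ℕ × ℕ
  | 0 => (0, 1)
  | k + 1 =>
    let p := blk a k
    (p.1 + p.2, (∑ i ∈ Finset.Ico p.1 (p.1 + p.2), (a.get i : ℕ)) + 1)

def blkSet (a : Stream' ℕ+) (k : ℕ) : Finset ℕ :=
  Finset.Ico (blk a k).1 ((blk a k).1 + (blk a k).2)

def ysum (a : Stream' ℕ+) (k : ℕ) : ℕ := ∑ i ∈ blkSet a k, (a.get i : ℕ)

lemma blk_snd (a : Stream' ℕ+) (k : ℕ) : (blk a (k + 1)).2 = ysum a k + 1 := rfl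

lemma blk_len_pos (a : Stream' ℕ+) (k : ℕ) : 0 < (blk a k).2 := by
  cases k with
  | zero => exact Nat.one_pos
  | succ k => rw [blk_snd]; omega

lemma len_le_ysum (a : Stream' ℕ+) (k : ℕ) : (blk a k).2 ≤ ysum a k := by
  have h1 : (blkSet a k).card = (blk a k).2 := by
    simp [blkSet, Nat.card_Ico]
  calc (blk a k).2 = ∑ _i ∈ blkSet a k, 1 := by rw [Finset.sum_const, smul_eq_mul, mul_one, h1]
    _ ≤ ∑ i ∈ blkSet a k, (a.get i : ℕ) :=
        Finset.sum_le_sum fun i _ => (a.get i).pos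

lemma ysum_pos (a : Stream' ℕ+) (k : ℕ) : 0 < ysum a k :=
  lt_of_lt_of_le (blk_len_pos a k) (len_le_ysum a k)

lemma ysum_strictMono (a : Stream' ℕ+) : StrictMono (ysum a) := by
  apply strictMono_nat_of_lt_succ
  intro k
  have h1 := len_le_ysum a (k + 1)
  rw [blk_snd] at h1
  omega

lemma blk_le (a : Stream' ℕ+) : ∀ {j k : ℕ}, j < k → (blk a j).1 + (blk a j).2 ≤ (blk a k).1 := by
  intro j k hjk
  induction k with
  | zero => omega
  | succ k ih =>
    have hfst : (blk a (k + 1)).1 = (blk a k).1 + (blk a k).2 := rfl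
    rcases Nat.lt_succ_iff_lt_or_eq.mp hjk with h | h
    · have := blk_len_pos a k
      have := ih h
      omega
    · subst h; omega

lemma blkSet_disjoint (a : Stream' ℕ+) {j k : ℕ} (h : j ≠ k) :
    Disjoint (blkSet a j) (blkSet a k) := by
  rcases h.lt_or_gt with h | h
  · refine Finset.disjoint_left.mpr fun i hi hik => ?_
    have h1 := blk_le a h
    simp only [blkSet, Finset.mem_Ico] at hi hik
    omega
  · refine Finset.disjoint_left.mpr fun i hi hik => ?_
    have h1 := blk_le a h
    simp only [blkSet, Finset.mem_Ico] at hi hik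
    omega

/-- Every member of an additive proper filter is additively
large. -/
theorem statement18 (F : Filter ℕ+) (hF : F.NeBot) (hadd : AdditiveFilter F) :
    ∀ A : Set ℕ+, A ∈ F → ∃ X : Set ℕ+, X.Infinite ∧ FS X ⊆ A := by
  intro A hA
  set S : Set (Ultrafilter ℕ+) := {U | ∀ B ∈ F, B ∈ (U : Filter ℕ+)} with hS
  have hSne : S.Nonempty := by
    obtain ⟨U, hU⟩ := Ultrafilter.exists_le F
    exact ⟨U, fun B hB => hU hB⟩
  have hSclosed : IsClosed S := by
    have h : S = ⋂ B ∈ F.sets, {U : Ultrafilter ℕ+ | B ∈ U} := by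
      ext U
      simp only [hS, Set.mem_iInter, Set.mem_setOf_eq, Filter.mem_sets, Ultrafilter.mem_coe]
    rw [h]
    exact isClosed_biInter fun B _ => ultrafilter_isClosed_basic B
  have hSadd : ∀ U ∈ S, ∀ V ∈ S, U + V ∈ S := by
    intro U hU V hV B hB
    have h1 : B ∈ psum F ↑V := hadd V (fun C hC => hV C hC) B hB
    have h2 : {n | shiftSet B n ∈ (V : Filter ℕ+)} ∈ (U : Filter ℕ+) := hU _ h1
    have h3 : ∀ᶠ m in ↑(U + V), m ∈ B := by
      rw [Ultrafilter.eventually_add]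
      filter_upwards [h2] with n hn
      filter_upwards [hn] with m hm
      rw [add_comm]
      exact hm
    exact h3
  obtain ⟨V, hVS, hVidem⟩ :=
    exists_idempotent_in_compact_add_subsemigroup Ultrafilter.continuous_add_left S hSne
      hSclosed.isCompact hSadd
  have hAV : A ∈ (V : Filter ℕ+) := hVS A hA
  obtain ⟨a, ha⟩ := Hindman.exists_FS_of_large V hVidem A hAV
  refine ⟨Set.range fun k => (⟨ysum a k, ysum_pos a k⟩ : ℕ+), ?_, ?_⟩
  · apply Set.infinite_range_of_injective
    intro j k h
    exact (ysum_strictMono a).injective (congrArg PNat.val h)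
  · rintro n ⟨G, hGne, hGsub, hGsum⟩
    set y : ℕ → ℕ+ := fun k => (⟨ysum a k, ysum_pos a k⟩ : ℕ+) with hy
    have hsub' : ↑G ⊆ y '' Set.univ := by rwa [Set.image_univ]
    obtain ⟨K, -, hK⟩ := Finset.subset_set_image_iff.mp hsub'
    have hKne : K.Nonempty := Finset.image_nonempty.mp (hK ▸ hGne)
    have hyinj : ∀ x ∈ K, ∀ x' ∈ K, y x = y x' → x = x' := fun j _ k _ h =>
      (ysum_strictMono a).injective (congrArg PNat.val h)
    have hsum1 : ∑ x ∈ G, (x : ℕ) = ∑ k ∈ K, ysum a k := by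
      rw [← hK, Finset.sum_image hyinj]
      rfl
    have hdisj : (↑K : Set ℕ).PairwiseDisjoint (blkSet a) := fun j _ k _ hjk =>
      blkSet_disjoint a hjk
    have hsum2 : ∑ k ∈ K, ysum a k = ∑ i ∈ K.biUnion (blkSet a), (a.get i : ℕ) :=
      (Finset.sum_biUnion hdisj).symm
    have hUne : (K.biUnion (blkSet a)).Nonempty := by
      obtain ⟨k, hk⟩ := hKne
      have : (blkSet a k).Nonempty := by
        rw [blkSet, Finset.nonempty_Ico]
        have := blk_len_pos a k
        omega
      obtain ⟨i, hi⟩ := this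
      exact ⟨i, Finset.mem_biUnion.mpr ⟨k, hk, hi⟩⟩
    obtain ⟨m, hm, hmv⟩ := sum_get_mem_FS _ _ rfl hUne a
    have hmn : m = n := PNat.coe_injective (by rw [hmv, ← hsum2, ← hsum1, hGsum])
    exact ha (hmn ▸ hm)
end

section
/- Let F be an additive proper filter on ℕ. Then for every set B ⊆ ℕ there exists an additive filter G on ℕ with F ⊆ G such that either B ∈ G or the complement of B is in G. -/
open Filter Set

attribute [local instance] Ultrafilter.add Ultrafilter.addSemigroup

lemma psum_eq_add (U V : Ultrafilter ℕ+) (A : Set ℕ+) :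
    A ∈ psum ↑U ↑V ↔ A ∈ ((U + V : Ultrafilter ℕ+) : Filter ℕ+) := by
  have h := Ultrafilter.eventually_add U V (· ∈ A)
  simp only [Filter.eventually_iff, Set.setOf_mem_eq] at h
  rw [h]
  show {n | shiftSet A n ∈ (V : Filter ℕ+)} ∈ (U : Filter ℕ+) ↔
    {n | {m' | n + m' ∈ A} ∈ (V : Filter ℕ+)} ∈ (U : Filter ℕ+)
  have hset : {n | shiftSet A n ∈ (V : Filter ℕ+)}
      = {n | {m' | n + m' ∈ A} ∈ (V : Filter ℕ+)} := by
    ext n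
    have : shiftSet A n = {m' | n + m' ∈ A} := by
      ext m; simp [shiftSet, add_comm]
    rw [Set.mem_setOf_eq, Set.mem_setOf_eq, this]
  rw [hset]

/-- For every additive proper filter `F` and every `B ⊆ ℕ+` there
is an additive (proper) filter `G ⊇ F` with `B ∈ G` or `Bᶜ ∈ G`. -/
theorem statement19 (F : Filter ℕ+) (hF : F.NeBot) (hadd : AdditiveFilter F)
    (B : Set ℕ+) :
    ∃ G : Filter ℕ+, G.NeBot ∧ AdditiveFilter G ∧
      (∀ A : Set ℕ+, A ∈ F → A ∈ G) ∧ (B ∈ G ∨ Bᶜ ∈ G) := by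
  -- `Cl F` is a nonempty compact subsemigroup of `Ultrafilter ℕ+`
  have hne : (clOf F).Nonempty := by
    obtain ⟨U, hU⟩ := Ultrafilter.exists_le F
    exact ⟨U, fun A hA => hU hA⟩
  have hclosed : IsClosed (clOf F) := by
    have : clOf F = ⋂ A ∈ F.sets, {U : Ultrafilter ℕ+ | A ∈ U} := by
      ext U; simp [clOf, Filter.mem_sets]
    rw [this]
    exact isClosed_biInter fun A _ => ultrafilter_isClosed_basic A
  have hadd' : ∀ U ∈ clOf F, ∀ V ∈ clOf F, U + V ∈ clOf F := by
    intro U hU V hV A hA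
    rw [← psum_eq_add]
    have h1 : A ∈ psum F ↑V := hadd V hV A hA
    exact hU _ h1
  obtain ⟨U, hUcl, hUU⟩ :=
    exists_idempotent_in_compact_add_subsemigroup
      (@Ultrafilter.continuous_add_left ℕ+ _) (clOf F) hne hclosed.isCompact hadd'
  refine ⟨↑U, U.neBot, ?_, hUcl, U.mem_or_compl_mem B⟩
  intro V hV A hA
  have hVU : (V : Filter ℕ+) ≤ ↑U := fun s hs => hV s hs
  have : V = U := Ultrafilter.coe_le_coe.mp hVU
  subst this
  rw [psum_eq_add, hUU]
  exact hA
end
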